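/- Let L(Q) = log det(Ψ Q⁻¹ Ψᵀ + D) + tr(S (Ψ Q⁻¹ Ψᵀ + D)⁻¹) + ‖Λ ∘ Q‖₁ and L̃(Q) = log det(Q + Ψᵀ D⁻¹ Ψ) − log det(Q) − tr(Ψᵀ D⁻¹ S D⁻¹ Ψ (Q + Ψᵀ D⁻¹ Ψ)⁻¹) + ‖Λ ∘ Q‖₁. Then L(Q) − L̃(Q) = log det(D) + tr(S D⁻¹), a constant independent of Q; hence L and L̃ have the same minimizers over positive definite Q. -/

import Mathlib

/-!
By the matrix determinant lemma, `det (Ψ Q⁻¹ Ψᵀ + D) = det D · det (Q + Ψᵀ D⁻¹ Ψ) / det Q`, and by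
the Woodbury identity together with cyclicity of the trace,
`tr (S (Ψ Q⁻¹ Ψᵀ + D)⁻¹) = tr (S D⁻¹) - tr (Ψᵀ D⁻¹ S D⁻¹ Ψ (Q + Ψᵀ D⁻¹ Ψ)⁻¹)`.
So the two objectives differ by a constant on positive definite `Q`, and a constant shift does not
move minimizers.
-/

open Matrix

theorem isMinOn_iff_of_sub_eq_const {α β : Type*} [AddCommGroup β] [PartialOrder β]
    [IsOrderedAddMonoid β] {f g : α → β} {s : Set α} {a : α} {c : β} (ha : a ∈ s)
    (h : ∀ x ∈ s, f x - g x = c) : IsMinOn f s a ↔ IsMinOn g s a := by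
  have hfg : ∀ x ∈ s, f x = g x + c := fun x hx => by rw [← h x hx, add_sub_cancel]
  simp only [isMinOn_iff]
  exact forall₂_congr fun x hx => by rw [hfg a ha, hfg x hx, add_le_add_iff_right]

namespace Matrix

variable {m k : Type*} [Fintype m] [DecidableEq m] [Fintype k]

theorem PosDef.add_transpose_mul_inv_mul {D : Matrix m m ℝ} {Q : Matrix k k ℝ} (hD : D.PosDef)
    (hQ : Q.PosDef) (Ψ : Matrix m k ℝ) : (Q + Ψᵀ * D⁻¹ * Ψ).PosDef :=
  hQ.add_posSemidef <| by
    simpa only [conjTranspose_eq_transpose_of_trivial] using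
      hD.inv.posSemidef.conjTranspose_mul_mul_same Ψ

variable [DecidableEq k]

theorem det_mul_inv_mul_add {K : Type*} [Field K] (D : Matrix m m K) (Q : Matrix k k K)
    (U : Matrix m k K) (V : Matrix k m K) (hD : IsUnit D.det) (hQ : IsUnit Q.det) :
    (U * Q⁻¹ * V + D).det = D.det * (Q + V * D⁻¹ * U).det / Q.det := by
  have hfactor : 1 + V * D⁻¹ * (U * Q⁻¹) = (Q + V * D⁻¹ * U) * Q⁻¹ := by
    rw [Matrix.add_mul, mul_nonsing_inv Q hQ]
    simp only [Matrix.mul_assoc]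
  rw [add_comm, det_add_mul _ _ hD, hfactor, det_mul, det_nonsing_inv, Ring.inverse_eq_inv',
    mul_div_assoc, div_eq_mul_inv]

theorem trace_mul_inv_mul_inv_mul_add {R : Type*} [CommRing R] (S D : Matrix m m R)
    (Q : Matrix k k R) (U : Matrix m k R) (V : Matrix k m R) (hD : IsUnit D) (hQ : IsUnit Q)
    (hM : IsUnit (Q + V * D⁻¹ * U)) :
    (S * (U * Q⁻¹ * V + D)⁻¹).trace
      = (S * D⁻¹).trace - (V * D⁻¹ * S * D⁻¹ * U * (Q + V * D⁻¹ * U)⁻¹).trace := by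
  have hQQ : Q⁻¹⁻¹ = Q := nonsing_inv_nonsing_inv Q ((isUnit_iff_isUnit_det Q).mp hQ)
  have woodbury : (U * Q⁻¹ * V + D)⁻¹ = D⁻¹ - D⁻¹ * U * (Q + V * D⁻¹ * U)⁻¹ * V * D⁻¹ := by
    rw [add_comm, add_mul_mul_inv_eq_sub D U Q⁻¹ V hD (isUnit_nonsing_inv_iff.mpr hQ)
      (by rwa [hQQ]), hQQ]
  rw [woodbury, Matrix.mul_sub, trace_sub, sub_right_inj]
  calc (S * (D⁻¹ * U * (Q + V * D⁻¹ * U)⁻¹ * V * D⁻¹)).trace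
      = ((S * D⁻¹ * U * (Q + V * D⁻¹ * U)⁻¹) * (V * D⁻¹)).trace := by
        simp only [Matrix.mul_assoc]
    _ = ((V * D⁻¹) * (S * D⁻¹ * U * (Q + V * D⁻¹ * U)⁻¹)).trace := trace_mul_comm _ _
    _ = (V * D⁻¹ * S * D⁻¹ * U * (Q + V * D⁻¹ * U)⁻¹).trace := by simp only [Matrix.mul_assoc]

theorem PosDef.log_det_mul_inv_mul_transpose_add {D : Matrix m m ℝ} {Q : Matrix k k ℝ}
    (hD : D.PosDef) (hQ : Q.PosDef) (Ψ : Matrix m k ℝ) :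
    Real.log (Ψ * Q⁻¹ * Ψᵀ + D).det
      = Real.log D.det + Real.log (Q + Ψᵀ * D⁻¹ * Ψ).det - Real.log Q.det := by
  rw [det_mul_inv_mul_add D Q Ψ Ψᵀ hD.det_pos.ne'.isUnit hQ.det_pos.ne'.isUnit,
    Real.log_div (mul_pos hD.det_pos (hD.add_transpose_mul_inv_mul hQ Ψ).det_pos).ne'
      hQ.det_pos.ne',
    Real.log_mul hD.det_pos.ne' (hD.add_transpose_mul_inv_mul hQ Ψ).det_pos.ne']

end Matrix

theorem fsbgl_likelihood_reduction_general
    {n J : ℕ}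
    (D S : Matrix (Fin n) (Fin n) ℝ) (Ψ : Matrix (Fin n) (Fin J) ℝ)
    (Λ : Matrix (Fin J) (Fin J) ℝ)
    (hD : D.PosDef)
    (L Lt : Matrix (Fin J) (Fin J) ℝ → ℝ)
    (hL : ∀ Q, L Q = Real.log (Ψ * Q⁻¹ * Ψᵀ + D).det
        + (S * (Ψ * Q⁻¹ * Ψᵀ + D)⁻¹).trace
        + ∑ i, ∑ j, |Λ i j * Q i j|)
    (hLt : ∀ Q, Lt Q = Real.log (Q + Ψᵀ * D⁻¹ * Ψ).det - Real.log Q.det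
        - (Ψᵀ * D⁻¹ * S * D⁻¹ * Ψ * (Q + Ψᵀ * D⁻¹ * Ψ)⁻¹).trace
        + ∑ i, ∑ j, |Λ i j * Q i j|) :
    (∀ Q : Matrix (Fin J) (Fin J) ℝ, Q.PosDef →
        L Q - Lt Q = Real.log D.det + (S * D⁻¹).trace) ∧
    (∀ Q₀ : Matrix (Fin J) (Fin J) ℝ, Q₀.PosDef →
        ((∀ Q, Q.PosDef → L Q₀ ≤ L Q) ↔ (∀ Q, Q.PosDef → Lt Q₀ ≤ Lt Q))) := by
  have difference_eq : ∀ Q : Matrix (Fin J) (Fin J) ℝ, Q.PosDef →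
      L Q - Lt Q = Real.log D.det + (S * D⁻¹).trace := by
    intro Q hQ
    rw [hL, hLt, hD.log_det_mul_inv_mul_transpose_add hQ Ψ,
      trace_mul_inv_mul_inv_mul_add S D Q Ψ Ψᵀ hD.isUnit hQ.isUnit
        (hD.add_transpose_mul_inv_mul hQ Ψ).isUnit]
    ring
  exact ⟨difference_eq, fun Q₀ hQ₀ =>
    isMinOn_iff_of_sub_eq_const (s := {Q | PosDef Q}) hQ₀ difference_eq⟩

theorem fsbgl_likelihood_reduction
    {n J : ℕ}
    (D S : Matrix (Fin n) (Fin n) ℝ) (Ψ : Matrix (Fin n) (Fin J) ℝ)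
    (Λ : Matrix (Fin J) (Fin J) ℝ)
    (hD : D.PosDef) (hS : S.PosSemidef) (hΛ : ∀ i j, 0 ≤ Λ i j)
    (L Lt : Matrix (Fin J) (Fin J) ℝ → ℝ)
    (hL : ∀ Q, L Q = Real.log (Ψ * Q⁻¹ * Ψᵀ + D).det
        + (S * (Ψ * Q⁻¹ * Ψᵀ + D)⁻¹).trace
        + ∑ i, ∑ j, |Λ i j * Q i j|)
    (hLt : ∀ Q, Lt Q = Real.log (Q + Ψᵀ * D⁻¹ * Ψ).det - Real.log Q.det
        - (Ψᵀ * D⁻¹ * S * D⁻¹ * Ψ * (Q + Ψᵀ * D⁻¹ * Ψ)⁻¹).trace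
        + ∑ i, ∑ j, |Λ i j * Q i j|) :
    (∀ Q : Matrix (Fin J) (Fin J) ℝ, Q.PosDef →
        L Q - Lt Q = Real.log D.det + (S * D⁻¹).trace) ∧
    (∀ Q₀ : Matrix (Fin J) (Fin J) ℝ, Q₀.PosDef →
        ((∀ Q, Q.PosDef → L Q₀ ≤ L Q) ↔ (∀ Q, Q.PosDef → Lt Q₀ ≤ Lt Q))) :=
  fsbgl_likelihood_reduction_general D S Ψ Λ hD L Lt hL hLt
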